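/- Let H be a complex Hilbert space with dim H ≥ 2 and let S, T be nonzero bounded linear operators on H. Then ε̂(ST) ≤ (‖S‖²‖T‖² − m(S)²m(T)²)/(‖S‖²‖T‖² + m(S)²m(T)²). -/

import Mathlib

open scoped ComplexInnerProductSpace

noncomputable section

variable {H : Type*} [NormedAddCommGroup H] [InnerProductSpace ℂ H] [CompleteSpace H]

/-- `T` is `ε`-approximately orthogonality preserving: orthogonal vectors are mapped to
`ε`-orthogonal vectors. -/
def IsAOP (T : H →L[ℂ] H) (ε : ℝ) : Prop :=
  ∀ x y : H, ⟪x, y⟫ = 0 → ‖⟪T x, T y⟫‖ ≤ ε * (‖T x‖ * ‖T y‖)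

/-- `ε̂(T)`, the smallest `ε ∈ [0,1]` for which `T` is `ε`-AOP. -/
def epsHat (T : H →L[ℂ] H) : ℝ :=
  sInf {ε : ℝ | 0 ≤ ε ∧ ε ≤ 1 ∧ IsAOP T ε}

/-- The minimum modulus `m(T) = inf {‖T x‖ : ‖x‖ = 1}`. -/
def minMod (T : H →L[ℂ] H) : ℝ :=
  sInf {r : ℝ | ∃ x : H, ‖x‖ = 1 ∧ ‖T x‖ = r}

/-- The set `ℂ𝒱` of scalar multiples of linear isometries of `H`. -/
def scalarIsoms (H : Type*) [NormedAddCommGroup H] [InnerProductSpace ℂ H] :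
    Set (H →L[ℂ] H) :=
  {S | ∃ (c : ℂ) (V : H →L[ℂ] H), (∀ x : H, ‖V x‖ = ‖x‖) ∧ S = c • V}

/-- `dist(T, ℂ𝒱)`. -/
def distCV (T : H →L[ℂ] H) : ℝ := Metric.infDist T (scalarIsoms H)

/-- The set `𝒱` of linear isometries of `H`. -/
def isoms (H : Type*) [NormedAddCommGroup H] [InnerProductSpace ℂ H] :
    Set (H →L[ℂ] H) :=
  {V | ∀ x : H, ‖V x‖ = ‖x‖}

/-- `dist(T, 𝒱)`. -/
def distV (T : H →L[ℂ] H) : ℝ := Metric.infDist T (isoms H)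

/-! Suppose `m ‖x‖ ≤ ‖A x‖ ≤ M ‖x‖` for all `x`. Given `x ⊥ y`, rescale and rotate them so that
`‖A x‖ = ‖A y‖` and `⟪A x, A y⟫ ≥ 0`. Then `x + y` and `x - y` have the same norm while
`‖A (x ± y)‖² = 2 ‖A x‖² ± 2 ⟪A x, A y⟫`, so comparing the upper bound at `x + y` with the lower
bound at `x - y` gives `(M² + m²) ⟪A x, A y⟫ ≤ (M² - m²) ‖A x‖ ‖A y‖`. For `A = S T` take
`m = m(S) m(T)` and `M = ‖S‖ ‖T‖`. -/

open scoped InnerProductSpace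

section RCLike

variable {𝕜 E F : Type*} [RCLike 𝕜] [NormedAddCommGroup E] [InnerProductSpace 𝕜 E]
  [NormedAddCommGroup F] [InnerProductSpace 𝕜 F]

open RCLike in
lemma re_inner_map_le_of_bounds (A : E →ₗ[𝕜] F) {m M : ℝ} (hm : 0 ≤ m)
    (hlow : ∀ x, m * ‖x‖ ≤ ‖A x‖) (hup : ∀ x, ‖A x‖ ≤ M * ‖x‖)
    {X Y : E} (hXY : ⟪X, Y⟫_𝕜 = 0) (hAXY : ‖A X‖ = ‖A Y‖) :
    (M ^ 2 + m ^ 2) * re ⟪A X, A Y⟫_𝕜 ≤ (M ^ 2 - m ^ 2) * ‖A X‖ ^ 2 := by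
  have hre : re ⟪X, Y⟫_𝕜 = 0 := by simp [hXY]
  have hadd : ‖A (X + Y)‖ ^ 2 ≤ M ^ 2 * (‖X‖ ^ 2 + ‖Y‖ ^ 2) := by
    have := pow_le_pow_left₀ (norm_nonneg _) (hup (X + Y)) 2
    rwa [mul_pow, norm_add_sq (𝕜 := 𝕜), hre, mul_zero, add_zero] at this
  have hsub : m ^ 2 * (‖X‖ ^ 2 + ‖Y‖ ^ 2) ≤ ‖A (X - Y)‖ ^ 2 := by
    have := pow_le_pow_left₀ (by positivity) (hlow (X - Y)) 2
    rwa [mul_pow, norm_sub_sq (𝕜 := 𝕜), hre, mul_zero, sub_zero] at this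
  rw [map_add, norm_add_sq (𝕜 := 𝕜), ← hAXY] at hadd
  rw [map_sub, norm_sub_sq (𝕜 := 𝕜), ← hAXY] at hsub
  nlinarith [mul_le_mul_of_nonneg_left hadd (sq_nonneg m),
    mul_le_mul_of_nonneg_left hsub (sq_nonneg M)]

end RCLike

lemma Complex.exists_norm_eq_one_mul_eq_norm (p : ℂ) : ∃ c : ℂ, ‖c‖ = 1 ∧ c * p = ‖p‖ :=
  ⟨exp (-(arg p : ℂ) * I), by simpa using norm_exp_ofReal_mul_I (-arg p), by
    conv_lhs => rw [← norm_mul_exp_arg_mul_I p]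
    rw [mul_left_comm, ← exp_add]
    simp⟩

section Complex

variable {E : Type*} [NormedAddCommGroup E] [InnerProductSpace ℂ E]

lemma isAOP_of_bounds (A : E →L[ℂ] E) {m M : ℝ} (hm : 0 ≤ m)
    (hlow : ∀ x, m * ‖x‖ ≤ ‖A x‖) (hup : ∀ x, ‖A x‖ ≤ M * ‖x‖) :
    IsAOP A ((M ^ 2 - m ^ 2) / (M ^ 2 + m ^ 2)) := by
  intro x y hxy
  set a := ‖A x‖
  set b := ‖A y‖
  set p := ⟪A x, A y⟫
  rcases (mul_nonneg (norm_nonneg (A x)) (norm_nonneg (A y))).eq_or_lt with hab | hab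
  · have : ‖p‖ ≤ a * b := norm_inner_le_norm _ _
    rw [← hab] at this ⊢
    simpa using this
  obtain ⟨c, hc, hcp⟩ := Complex.exists_norm_eq_one_mul_eq_norm p
  set X := (b : ℂ) • x
  set Y := ((a : ℂ) * c) • y
  have hXY : ⟪X, Y⟫ = 0 := by rw [inner_smul_left, inner_smul_right, hxy, mul_zero, mul_zero]
  have hAX : ‖A X‖ = a * b := by simp [X, norm_smul, a, b, mul_comm]
  have hAY : ‖A Y‖ = a * b := by simp [Y, norm_smul, hc, a, b]
  have hAXY : ⟪A X, A Y⟫ = ((a * b * ‖p‖ : ℝ) : ℂ) := by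
    simp only [X, Y, map_smul, inner_smul_left, inner_smul_right, Complex.conj_ofReal]
    push_cast
    rw [← hcp]
    ring
  have key := re_inner_map_le_of_bounds A.toLinearMap hm hlow hup hXY (hAX.trans hAY.symm)
  rw [ContinuousLinearMap.coe_coe, hAXY, hAX] at key
  have hM : M ≠ 0 := by
    rintro rfl
    nlinarith [hup x, norm_nonneg (A y)]
  rw [RCLike.re_to_complex, Complex.ofReal_re] at key
  rw [div_mul_eq_mul_div, le_div_iff₀ (by positivity)]
  exact le_of_mul_le_mul_left (by linarith) hab

lemma minMod_nonneg (T : E →L[ℂ] E) : 0 ≤ minMod T :=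
  Real.sInf_nonneg (by rintro r ⟨x, -, rfl⟩; exact norm_nonneg _)

lemma minMod_le_norm_apply (T : E →L[ℂ] E) {u : E} (hu : ‖u‖ = 1) : minMod T ≤ ‖T u‖ :=
  csInf_le ⟨0, by rintro r ⟨x, -, rfl⟩; exact norm_nonneg _⟩ ⟨u, hu, rfl⟩

lemma minMod_mul_norm_le (T : E →L[ℂ] E) (x : E) : minMod T * ‖x‖ ≤ ‖T x‖ := by
  rcases eq_or_ne x 0 with rfl | hx
  · simp
  have hu := minMod_le_norm_apply T (norm_smul_inv_norm (𝕜 := ℂ) hx)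
  rwa [map_smul, norm_smul, norm_inv, RCLike.norm_ofReal, abs_norm,
    ← div_eq_inv_mul, le_div_iff₀ (norm_pos_iff.mpr hx)] at hu

lemma minMod_le_opNorm (T : E →L[ℂ] E) : minMod T ≤ ‖T‖ := by
  rcases subsingleton_or_nontrivial E with hE | hE
  · have : {r : ℝ | ∃ x : E, ‖x‖ = 1 ∧ ‖T x‖ = r} = ∅ := by
      ext r
      simp [Subsingleton.elim _ (0 : E)]
    rw [minMod, this, Real.sInf_empty]
    exact norm_nonneg T
  obtain ⟨u, hu⟩ := exists_norm_eq E zero_le_one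
  calc minMod T ≤ ‖T u‖ := minMod_le_norm_apply T hu
    _ ≤ ‖T‖ := by simpa [hu] using T.le_opNorm u

lemma minMod_mul_minMod_mul_norm_le (S T : E →L[ℂ] E) (x : E) :
    minMod S * minMod T * ‖x‖ ≤ ‖(S ∘L T) x‖ :=
  calc minMod S * minMod T * ‖x‖ = minMod S * (minMod T * ‖x‖) := mul_assoc _ _ _
    _ ≤ minMod S * ‖T x‖ := mul_le_mul_of_nonneg_left (minMod_mul_norm_le T x) (minMod_nonneg S)
    _ ≤ ‖S (T x)‖ := minMod_mul_norm_le S (T x)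

lemma epsHat_le_of_isAOP {T : E →L[ℂ] E} {ε : ℝ} (h0 : 0 ≤ ε) (h1 : ε ≤ 1) (hT : IsAOP T ε) :
    epsHat T ≤ ε :=
  csInf_le ⟨0, fun _ hε => hε.1⟩ ⟨h0, h1, hT⟩

end Complex

theorem epsHat_comp_le_general (S T : H →L[ℂ] H) :
    epsHat (S ∘L T) ≤
      (‖S‖ ^ 2 * ‖T‖ ^ 2 - minMod S ^ 2 * minMod T ^ 2) /
        (‖S‖ ^ 2 * ‖T‖ ^ 2 + minMod S ^ 2 * minMod T ^ 2) := by
  have hm : 0 ≤ minMod S * minMod T := mul_nonneg (minMod_nonneg S) (minMod_nonneg T)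
  have hmM : minMod S * minMod T ≤ ‖S‖ * ‖T‖ :=
    mul_le_mul (minMod_le_opNorm S) (minMod_le_opNorm T) (minMod_nonneg T) (norm_nonneg S)
  have hAOP := isAOP_of_bounds (S ∘L T) hm (minMod_mul_minMod_mul_norm_le S T)
    ((S ∘L T).le_of_opNorm_le (S.opNorm_comp_le T))
  have hsq := pow_le_pow_left₀ hm hmM 2
  simp only [mul_pow] at hAOP hsq
  refine epsHat_le_of_isAOP (div_nonneg (sub_nonneg.2 hsq) (by positivity))
    (div_le_one_of_le₀ ?_ (by positivity)) hAOP
  linarith [mul_nonneg (sq_nonneg (minMod S)) (sq_nonneg (minMod T))]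

/-- For nonzero `S, T`:
`ε̂(ST) ≤ (‖S‖²‖T‖² − m(S)²m(T)²)/(‖S‖²‖T‖² + m(S)²m(T)²)`. -/
theorem epsHat_comp_le (hdim : 2 ≤ Module.rank ℂ H)
    (S T : H →L[ℂ] H) (hS : S ≠ 0) (hT : T ≠ 0) :
    epsHat (S ∘L T) ≤
      (‖S‖ ^ 2 * ‖T‖ ^ 2 - minMod S ^ 2 * minMod T ^ 2) /
        (‖S‖ ^ 2 * ‖T‖ ^ 2 + minMod S ^ 2 * minMod T ^ 2) :=
  epsHat_comp_le_general S T
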